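/- arXiv:1901.02820 — 2 statements merged into one kernel-verified Lean document; each statement's English description precedes it below -/
import Mathlib

section
/- Let N ≥ 1 be a natural number and let w, u, β, k, μ be real numbers. Let A_β be the (N+1)×(N+1) real matrix with entries: A_{ii} = 0 for 1 ≤ i ≤ N, A_{ij} = −βw for 1 ≤ i ≠ j ≤ N, A_{i,N+1} = kw for 1 ≤ i ≤ N, A_{N+1,j} = −ku for 1 ≤ j ≤ N, and A_{N+1,N+1} = −μu. Then for every real number γ, det(A_β − γ·Id) = (βw − γ)^{N−1} · (γ² + γ·(μu + (N−1)βw) + ((N−1)βμ + Nk²)·u·w). -/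
open Matrix Polynomial

namespace Stmt3Aux

def Amat (N : ℕ) (w u β k μ : ℝ) : Matrix (Fin (N + 1)) (Fin (N + 1)) ℝ :=
  Matrix.of fun (i j : Fin (N + 1)) =>
    if i.val < N then
      (if j.val < N then (if i = j then (0 : ℝ) else -β * w) else k * w)
    else (if j.val < N then -k * u else -μ * u)

def Cmat (N : ℕ) : Matrix (Fin (N + 1)) (Fin 2) ℝ :=
  Matrix.of fun i a => if a = 0 then (if (i : ℕ) < N then 1 else 0)
    else (if (i : ℕ) < N then 0 else 1)

def Rmat (N : ℕ) (w u β k μ : ℝ) : Matrix (Fin 2) (Fin (N + 1)) ℝ :=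
  Matrix.of fun a j => if a = 0 then (if (j : ℕ) < N then -β * w else k * w)
    else (if (j : ℕ) < N then -k * u else -μ * u - β * w)

lemma sum_if (N : ℕ) (c d : ℝ) :
    ∑ j : Fin (N + 1), (if (j : ℕ) < N then c else d) = N * c + d := by
  rw [Fin.sum_univ_eq_sum_range (fun j => if j < N then c else d), Finset.sum_range_succ]
  rw [Finset.sum_congr rfl (fun j hj => if_pos (Finset.mem_range.mp hj))]
  simp [mul_comm]

lemma decomp (N : ℕ) (w u β k μ γ : ℝ) :
    Amat N w u β k μ - γ • 1 =
      (β * w - γ) • 1 + Cmat N * Rmat N w u β k μ := by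
  ext i j
  simp only [Amat, Cmat, Rmat, Matrix.sub_apply, Matrix.add_apply, Matrix.smul_apply,
    Matrix.mul_apply, Fin.sum_univ_two, Matrix.of_apply, smul_eq_mul]
  rcases eq_or_ne i j with rfl | hij
  · by_cases hi : (i : ℕ) < N <;> simp [Matrix.one_apply, hi] <;> ring
  · by_cases hi : (i : ℕ) < N <;> by_cases hj : (j : ℕ) < N
    · simp [Matrix.one_apply, hij, hi, hj]
    · simp [Matrix.one_apply, hij, hi, hj]
    · simp [Matrix.one_apply, hij, hi, hj]
    · exact absurd (Fin.ext (by omega)) hij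

lemma RC (N : ℕ) (w u β k μ : ℝ) :
    Rmat N w u β k μ * Cmat N =
      !![-(N : ℝ) * β * w, k * w; -(N : ℝ) * k * u, -μ * u - β * w] := by
  ext a b
  fin_cases a <;> fin_cases b
  · show (Rmat N w u β k μ * Cmat N) 0 0 = -(N : ℝ) * β * w
    rw [Matrix.mul_apply]
    calc ∑ j : Fin (N + 1), Rmat N w u β k μ 0 j * Cmat N j 0
        = ∑ j : Fin (N + 1), (if (j : ℕ) < N then -β * w else 0) :=
          Finset.sum_congr rfl fun j _ => by
            simp only [Rmat, Cmat, Matrix.of_apply, if_pos rfl]; split_ifs <;> ring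
      _ = N * (-β * w) + 0 := sum_if N _ _
      _ = -(N : ℝ) * β * w := by ring
  · show (Rmat N w u β k μ * Cmat N) 0 1 = k * w
    rw [Matrix.mul_apply]
    calc ∑ j : Fin (N + 1), Rmat N w u β k μ 0 j * Cmat N j 1
        = ∑ j : Fin (N + 1), (if (j : ℕ) < N then 0 else k * w) :=
          Finset.sum_congr rfl fun j _ => by
            simp only [Rmat, Cmat, Matrix.of_apply]; norm_num; split_ifs <;> ring
      _ = N * 0 + k * w := sum_if N _ _
      _ = k * w := by ring
  · show (Rmat N w u β k μ * Cmat N) 1 0 = -(N : ℝ) * k * u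
    rw [Matrix.mul_apply]
    calc ∑ j : Fin (N + 1), Rmat N w u β k μ 1 j * Cmat N j 0
        = ∑ j : Fin (N + 1), (if (j : ℕ) < N then -k * u else 0) :=
          Finset.sum_congr rfl fun j _ => by
            simp only [Rmat, Cmat, Matrix.of_apply]; norm_num; split_ifs <;> ring
      _ = N * (-k * u) + 0 := sum_if N _ _
      _ = -(N : ℝ) * k * u := by ring
  · show (Rmat N w u β k μ * Cmat N) 1 1 = -μ * u - β * w
    rw [Matrix.mul_apply]
    calc ∑ j : Fin (N + 1), Rmat N w u β k μ 1 j * Cmat N j 1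
        = ∑ j : Fin (N + 1), (if (j : ℕ) < N then 0 else -μ * u - β * w) :=
          Finset.sum_congr rfl fun j _ => by
            simp only [Rmat, Cmat, Matrix.of_apply]; norm_num; split_ifs <;> ring
      _ = N * 0 + (-μ * u - β * w) := sum_if N _ _
      _ = -μ * u - β * w := by ring

lemma generic (n : ℕ) (w u β k μ γ : ℝ) (hne : β * w - γ ≠ 0) :
    (Amat (n + 1) w u β k μ - γ • 1).det =
      (β * w - γ) ^ n * (γ ^ 2 + γ * (μ * u + (n : ℝ) * β * w) +
        ((n : ℝ) * β * μ + ((n : ℝ) + 1) * k ^ 2) * u * w) := by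
  set t := β * w - γ with ht
  rw [decomp]
  have h1 : t • (1 : Matrix (Fin (n + 1 + 1)) (Fin (n + 1 + 1)) ℝ)
      + Cmat (n + 1) * Rmat (n + 1) w u β k μ
      = t • (1 + (t⁻¹ • Cmat (n + 1)) * Rmat (n + 1) w u β k μ) := by
    rw [smul_add, Matrix.smul_mul, smul_smul, mul_inv_cancel₀ hne, one_smul]
  rw [h1, Matrix.det_smul, Matrix.det_one_add_mul_comm, Matrix.mul_smul, RC]
  rw [Matrix.det_fin_two]
  simp only [Matrix.add_apply, Matrix.smul_apply, Matrix.one_apply, Fintype.card_fin,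
    smul_eq_mul]
  norm_num
  have h2 : t ^ (n + 1 + 1) = t ^ n * t ^ 2 := by ring
  rw [h2, mul_assoc]
  congr 1
  field_simp
  rw [ht]
  ring

lemma eval_det (n : ℕ) (w u β k μ x : ℝ) :
    (((Amat (n + 1) w u β k μ).map Polynomial.C - (X : ℝ[X]) • 1).det).eval x
      = (Amat (n + 1) w u β k μ - x • 1).det := by
  have hmap : ((Amat (n + 1) w u β k μ).map Polynomial.C - (X : ℝ[X]) • 1).map
      (Polynomial.eval x) = Amat (n + 1) w u β k μ - x • 1 := by
    ext i j
    simp only [Matrix.map_apply, Matrix.sub_apply, Matrix.smul_apply, Matrix.one_apply,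
      smul_eq_mul, Polynomial.eval_sub, Polynomial.eval_C, Polynomial.eval_mul,
      Polynomial.eval_X]
    split_ifs <;> simp
  rw [← hmap]
  exact (RingHom.map_det (Polynomial.evalRingHom x)
    ((Amat (n + 1) w u β k μ).map Polynomial.C - (X : ℝ[X]) • 1))

lemma key (n : ℕ) (w u β k μ x : ℝ) :
    (Amat (n + 1) w u β k μ - x • 1).det =
      (β * w - x) ^ n * (x ^ 2 + x * (μ * u + (n : ℝ) * β * w) +
        ((n : ℝ) * β * μ + ((n : ℝ) + 1) * k ^ 2) * u * w) := by
  set p : ℝ[X] := ((Amat (n + 1) w u β k μ).map Polynomial.C - (X : ℝ[X]) • 1).det with hp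
  set q : ℝ[X] := (Polynomial.C (β * w) - X) ^ n *
    (X ^ 2 + X * Polynomial.C (μ * u + (n : ℝ) * β * w) +
      Polynomial.C (((n : ℝ) * β * μ + ((n : ℝ) + 1) * k ^ 2) * u * w)) with hq'
  have hq : ∀ y : ℝ, q.eval y = (β * w - y) ^ n * (y ^ 2 + y * (μ * u + (n : ℝ) * β * w) +
      ((n : ℝ) * β * μ + ((n : ℝ) + 1) * k ^ 2) * u * w) := by
    intro y; simp [hq']
  have hpq : p = q := by
    apply Polynomial.eq_of_infinite_eval_eq
    apply ((Set.finite_singleton (β * w)).infinite_compl).mono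
    intro y hy
    have hy' : β * w - y ≠ 0 := sub_ne_zero.mpr (Ne.symm hy)
    simp only [Set.mem_setOf_eq]
    rw [hp, eval_det, hq, generic n w u β k μ y hy']
  rw [← eval_det n w u β k μ x, ← hp, hpq, hq]

end Stmt3Aux

/-- Characteristic polynomial of the linearization matrix `A_β` (Lemma 3.3):
for the `(N+1)×(N+1)` matrix whose upper-left `N×N` block has `0` on the diagonal
and `−βw` off the diagonal, whose last column (first `N` entries) is `kw`, whose
last row (first `N` entries) is `−ku`, and whose bottom-right entry is `−μu`, one has
`det(A_β − γ Id) = (βw − γ)^(N−1) (γ² + γ(μu + (N−1)βw) + ((N−1)βμ + Nk²) u w)`. -/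
theorem stmt3 (N : ℕ) (hN : 1 ≤ N) (w u β k μ : ℝ)
    (A : Matrix (Fin (N + 1)) (Fin (N + 1)) ℝ)
    (hA : A = Matrix.of fun (i j : Fin (N + 1)) =>
      if i.val < N then
        (if j.val < N then (if i = j then (0 : ℝ) else -β * w) else k * w)
      else (if j.val < N then -k * u else -μ * u))
    (γ : ℝ) :
    (A - γ • (1 : Matrix (Fin (N + 1)) (Fin (N + 1)) ℝ)).det =
      (β * w - γ) ^ (N - 1) *
        (γ ^ 2 + γ * (μ * u + ((N : ℝ) - 1) * β * w) +
          (((N : ℝ) - 1) * β * μ + (N : ℝ) * k ^ 2) * u * w) := by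
  obtain ⟨n, rfl⟩ : ∃ n, N = n + 1 := ⟨N - 1, (Nat.succ_pred_eq_of_pos hN).symm⟩
  have hA' : A = Stmt3Aux.Amat (n + 1) w u β k μ := hA
  subst hA'
  rw [Stmt3Aux.key n w u β k μ γ]
  simp only [Nat.add_sub_cancel]
  push_cast
  ring
end

section
/- Let N ≥ 2 be a natural number and let w, u, β, k, μ be positive real numbers. Let A_β be the (N+1)×(N+1) real matrix with entries: A_{ii} = 0 for 1 ≤ i ≤ N, A_{ij} = −βw for 1 ≤ i ≠ j ≤ N, A_{i,N+1} = kw for 1 ≤ i ≤ N, A_{N+1,j} = −ku for 1 ≤ j ≤ N, and A_{N+1,N+1} = −μu. Then βw is an eigenvalue of A_β (over ℂ) of algebraic multiplicity exactly N−1, and every complex eigenvalue of A_β different from βw has strictly negative real part; in particular, A_β has an eigenvalue with strictly positive real part. -/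
open Polynomial Matrix Finset

lemma charpoly_A (N : ℕ) (hN : 2 ≤ N) (w u β k μ : ℝ)
    (A : Matrix (Fin (N + 1)) (Fin (N + 1)) ℝ)
    (hA : A = Matrix.of fun (i j : Fin (N + 1)) =>
      if i.val < N then
        (if j.val < N then (if i = j then (0 : ℝ) else -β * w) else k * w)
      else (if j.val < N then -k * u else -μ * u)) :
    A.charpoly = (X - C (β * w)) ^ (N - 1) *
      (X ^ 2 + C (μ * u + ((N : ℝ) - 1) * (β * w)) * X
        + C (((N : ℝ) - 1) * (β * w) * (μ * u) + (N : ℝ) * (k * u) * (k * w))) := by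
  set n1 : Fin (N + 1) := ⟨N - 1, by omega⟩ with hn1
  set nl : Fin (N + 1) := ⟨N, by omega⟩ with hnl
  have hn1v : n1.val = N - 1 := rfl
  have hnlv : nl.val = N := rfl
  have hn1nl : n1 ≠ nl := by
    intro h; have := congrArg Fin.val h; rw [hn1v, hnlv] at this; omega
  -- the charmatrix, explicitly
  set M : Matrix (Fin (N + 1)) (Fin (N + 1)) ℝ[X] := A.charmatrix with hM
  have hMe : ∀ i j : Fin (N + 1), M i j =
      if i.val < N then
        (if j.val < N then (if i = j then X else C (β * w)) else C (- (k * w)))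
      else (if j.val < N then C (k * u) else X + C (μ * u)) := by
    intro i j
    by_cases hij : i = j
    · subst hij
      rw [hM, charmatrix_apply_eq, hA]
      by_cases hi : i.val < N <;> simp [hi]
    · rw [hM, charmatrix_apply_ne _ _ _ hij, hA]
      by_cases hi : i.val < N <;> by_cases hj : j.val < N
      · simp [hi, hj, hij]
      · simp [hi, hj]
      · simp [hi, hj]
      · exact absurd (Fin.ext (by omega : i.val = j.val)) hij
  -- cardinality of the small-index block
  have hfilt : (univ.filter (fun l : Fin (N + 1) => l.val < N - 1)).card = N - 1 := by
    rw [Finset.card_filter, Fin.sum_univ_eq_sum_range (fun i => if i < N - 1 then (1 : ℕ) else 0),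
      ← Finset.card_filter,
      show (Finset.range (N + 1)).filter (fun i => i < N - 1) = Finset.range (N - 1) by
        ext; simp; omega,
      Finset.card_range]
  -- row/column operation matrices
  set Ee : Matrix (Fin (N + 1)) (Fin (N + 1)) ℝ[X] :=
    Matrix.of (fun i j => if i.val < N - 1 ∧ j = n1 then (-1 : ℝ[X]) else 0) with hEe
  set Ff : Matrix (Fin (N + 1)) (Fin (N + 1)) ℝ[X] :=
    Matrix.of (fun i j => if i.val < N - 1 ∧ j = n1 then (1 : ℝ[X]) else 0) with hFf
  set L : Matrix (Fin (N + 1)) (Fin (N + 1)) ℝ[X] := 1 + Ee with hL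
  set R : Matrix (Fin (N + 1)) (Fin (N + 1)) ℝ[X] := 1 + Ff with hR
  have hEdiag : ∀ i, Ee i i = 0 := by
    intro i; rw [hEe]
    simp only [Matrix.of_apply, ite_eq_right_iff]
    rintro ⟨h1, rfl⟩; rw [hn1v] at h1; omega
  have hFdiag : ∀ i, Ff i i = 0 := by
    intro i; rw [hFf]
    simp only [Matrix.of_apply, ite_eq_right_iff]
    rintro ⟨h1, rfl⟩; rw [hn1v] at h1; omega
  have hdetL : L.det = 1 := by
    rw [Matrix.det_of_upperTriangular]
    · rw [Finset.prod_eq_one]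
      intro i _
      rw [hL]; simp [hEdiag i]
    · intro i j hji
      rw [hL]
      have hij : i ≠ j := fun h => by subst h; exact lt_irrefl _ hji
      simp only [Matrix.add_apply, Matrix.one_apply_ne hij, hEe, Matrix.of_apply, zero_add,
        ite_eq_right_iff]
      rintro ⟨h1, rfl⟩
      have hlt : (N - 1 : ℕ) < i.val := by
        simpa [Fin.lt_iff_val_lt_val, hn1v] using hji
      omega
  have hdetR : R.det = 1 := by
    rw [Matrix.det_of_upperTriangular]
    · rw [Finset.prod_eq_one]
      intro i _
      rw [hR]; simp [hFdiag i]
    · intro i j hji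
      rw [hR]
      have hij : i ≠ j := fun h => by subst h; exact lt_irrefl _ hji
      simp only [Matrix.add_apply, Matrix.one_apply_ne hij, hFf, Matrix.of_apply, zero_add,
        ite_eq_right_iff]
      rintro ⟨h1, rfl⟩
      have hlt : (N - 1 : ℕ) < i.val := by
        simpa [Fin.lt_iff_val_lt_val, hn1v] using hji
      omega
  -- L * M computed
  have hLM : ∀ i j, (L * M) i j =
      if i.val < N - 1 then
        (if i = j then X - C (β * w) else if j = n1 then C (β * w) - X else 0)
      else M i j := by
    intro i j
    have hEM : (Ee * M) i j = if i.val < N - 1 then -(M n1 j) else 0 := by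
      rw [Matrix.mul_apply]
      by_cases hi : i.val < N - 1
      · simp only [hEe, Matrix.of_apply, hi, true_and, ite_mul, neg_one_mul, zero_mul]
        rw [Finset.sum_ite_eq' univ n1 (fun l => -(M l j))]
        simp
      · simp [hEe, hi]
    rw [hL, Matrix.add_mul, Matrix.one_mul, Matrix.add_apply, hEM]
    by_cases hi : i.val < N - 1
    · rw [if_pos hi, if_pos hi]
      by_cases hij : i = j
      · subst hij
        rw [if_pos rfl]
        have h1 : (M i i) = X := by rw [hMe]; simp [show i.val < N by omega]
        have h2 : M n1 i = C (β * w) := by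
          rw [hMe]
          have hne : n1 ≠ i := by
            intro h; rw [← h, hn1v] at hi; omega
          simp [show (n1 : Fin (N+1)).val < N by rw [hn1v]; omega,
            show i.val < N by omega, hne]
        rw [h1, h2]; ring
      · rw [if_neg hij]
        by_cases hjn : j = n1
        · subst hjn
          rw [if_pos rfl]
          have h1 : M i n1 = C (β * w) := by
            rw [hMe]
            simp [show i.val < N by omega, show (n1 : Fin (N+1)).val < N by rw [hn1v]; omega, hij]
          have h2 : M n1 n1 = X := by
            rw [hMe]; simp [show (n1 : Fin (N+1)).val < N by rw [hn1v]; omega]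
          rw [h1, h2]; ring
        · rw [if_neg hjn]
          by_cases hjN : j.val < N
          · have h1 : M i j = C (β * w) := by
              rw [hMe]; simp [show i.val < N by omega, hjN, hij]
            have h2 : M n1 j = C (β * w) := by
              rw [hMe]
              have hne : n1 ≠ j := fun h => hjn h.symm
              simp [show (n1 : Fin (N+1)).val < N by rw [hn1v]; omega, hjN, hne]
            rw [h1, h2]; ring
          · have h1 : M i j = C (-(k * w)) := by
              rw [hMe]; simp [show i.val < N by omega, hjN]
            have h2 : M n1 j = C (-(k * w)) := by
              rw [hMe]; simp [show (n1 : Fin (N+1)).val < N by rw [hn1v]; omega, hjN]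
            rw [h1, h2]; ring
    · simp [hi]
  -- sums of rows over the small block
  have hS : ∀ i : Fin (N + 1),
      (∑ l ∈ univ.filter (fun l : Fin (N + 1) => l.val < N - 1), (L * M) i l) =
      if i.val < N - 1 then X - C (β * w)
      else if i = n1 then C (((N : ℝ) - 1) * (β * w))
      else C (((N : ℝ) - 1) * (k * u)) := by
    intro i
    by_cases hi : i.val < N - 1
    · rw [if_pos hi]
      have hcongr : ∀ l ∈ univ.filter (fun l : Fin (N + 1) => l.val < N - 1),
          (L * M) i l = if l = i then X - C (β * w) else 0 := by
        intro l hl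
        rw [Finset.mem_filter] at hl
        rw [hLM, if_pos hi]
        by_cases hli : i = l
        · subst hli; simp
        · rw [if_neg hli, if_neg (show l ≠ n1 from fun h => by
            rw [h, hn1v] at hl; omega), if_neg (fun h => hli h.symm)]
      rw [Finset.sum_congr rfl hcongr, Finset.sum_ite_eq' _ i _,
        if_pos (by simp [hi])]
    · rw [if_neg hi]
      by_cases hin : i = n1
      · subst hin
        rw [if_pos rfl]
        have hcongr : ∀ l ∈ univ.filter (fun l : Fin (N + 1) => l.val < N - 1),
            (L * M) n1 l = C (β * w) := by
          intro l hl
          rw [Finset.mem_filter] at hl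
          rw [hLM, if_neg (show ¬ (n1 : Fin (N+1)).val < N - 1 by rw [hn1v]; omega), hMe]
          have hne : n1 ≠ l := fun h => by rw [← h, hn1v] at hl; omega
          simp [show (n1 : Fin (N+1)).val < N by rw [hn1v]; omega,
            show l.val < N by omega, hne]
        rw [Finset.sum_congr rfl hcongr, Finset.sum_const, hfilt,
          ← _root_.map_nsmul (C : ℝ →+* ℝ[X])]
        congr 1
        rw [nsmul_eq_mul, Nat.cast_sub (by omega : 1 ≤ N), Nat.cast_one]
      · rw [if_neg hin]
        have hiN : ¬ i.val < N := by
          have : i.val ≠ N - 1 := fun h => hin (Fin.ext (h.trans hn1v.symm))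
          omega
        have hcongr : ∀ l ∈ univ.filter (fun l : Fin (N + 1) => l.val < N - 1),
            (L * M) i l = C (k * u) := by
          intro l hl
          rw [Finset.mem_filter] at hl
          rw [hLM, if_neg hi, hMe, if_neg hiN, if_pos (show l.val < N by omega)]
        rw [Finset.sum_congr rfl hcongr, Finset.sum_const, hfilt,
          ← _root_.map_nsmul (C : ℝ →+* ℝ[X])]
        congr 1
        rw [nsmul_eq_mul, Nat.cast_sub (by omega : 1 ≤ N), Nat.cast_one]
  -- the fully reduced matrix
  have hM2 : ∀ i j, (L * M * R) i j =
      if i.val < N - 1 then (if i = j then X - C (β * w) else 0)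
      else if i = n1 then
        (if j.val < N - 1 then C (β * w)
         else if j = n1 then X + C (((N : ℝ) - 1) * (β * w)) else C (-(k * w)))
      else
        (if j.val < N - 1 then C (k * u)
         else if j = n1 then C ((N : ℝ) * (k * u)) else X + C (μ * u)) := by
    intro i j
    have hMF : ((L * M) * Ff) i j =
        if j = n1 then (∑ l ∈ univ.filter (fun l : Fin (N + 1) => l.val < N - 1), (L * M) i l)
        else 0 := by
      rw [Matrix.mul_apply]
      by_cases hj : j = n1
      · subst hj
        rw [if_pos rfl]
        rw [show (∑ l, (L * M) i l * Ff l n1) =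
            ∑ l, (if l.val < N - 1 then (L * M) i l else 0) from
          Finset.sum_congr rfl (fun l _ => by
            rw [hFf]; simp only [Matrix.of_apply, and_true]
            by_cases hl : l.val < N - 1 <;> simp [hl])]
        exact (Finset.sum_filter _ _).symm
      · rw [if_neg hj]
        apply Finset.sum_eq_zero
        intro l _
        rw [hFf]
        simp [hj]
    rw [hR, Matrix.mul_add, Matrix.mul_one, Matrix.add_apply, hMF, hS i, hLM i j]
    by_cases hi : i.val < N - 1
    · rw [if_pos hi, if_pos hi, if_pos hi]
      by_cases hij : i = j
      · subst hij
        rw [if_pos rfl, if_pos rfl, if_neg (show i ≠ n1 from fun h => by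
          rw [h, hn1v] at hi; omega)]
        ring
      · rw [if_neg hij, if_neg hij]
        by_cases hjn : j = n1
        · rw [if_pos hjn, if_pos hjn]; ring
        · rw [if_neg hjn, if_neg hjn]; ring
    · rw [if_neg hi, if_neg hi, if_neg hi, hMe]
      by_cases hin : i = n1
      · subst hin
        rw [if_pos rfl, if_pos (show (n1 : Fin (N+1)).val < N by rw [hn1v]; omega)]
        by_cases hjn : j = n1
        · subst hjn
          rw [if_pos rfl, if_pos rfl, if_pos (show (n1 : Fin (N+1)).val < N by rw [hn1v]; omega),
            if_pos rfl, if_neg (show ¬ (n1 : Fin (N+1)).val < N - 1 by rw [hn1v]; omega)]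
          simp
        · rw [if_neg hjn, if_neg hjn]
          by_cases hjs : j.val < N - 1
          · rw [if_pos hjs, if_pos (show j.val < N by omega),
              if_neg (show n1 ≠ j from fun h => by rw [← h, hn1v] at hjs; omega)]
            simp
          · rw [if_neg hjs]
            have hjN : ¬ j.val < N := by
              have : j.val ≠ N - 1 := fun h => hjn (Fin.ext (h.trans hn1v.symm))
              omega
            rw [if_neg hjN]
            simp
      · rw [if_neg hin, if_neg hin]
        have hiN : ¬ i.val < N := by
          have : i.val ≠ N - 1 := fun h => hin (Fin.ext (h.trans hn1v.symm))
          omega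
        rw [if_neg hiN]
        by_cases hjn : j = n1
        · subst hjn
          rw [if_pos rfl, if_pos rfl, if_pos (show (n1 : Fin (N+1)).val < N by rw [hn1v]; omega),
            if_neg (show ¬ (n1 : Fin (N+1)).val < N - 1 by rw [hn1v]; omega),
            ← map_add]
          congr 1
          ring
        · rw [if_neg hjn, if_neg hjn]
          by_cases hjs : j.val < N - 1
          · rw [if_pos hjs, if_pos (show j.val < N by omega)]; ring
          · rw [if_neg hjs]
            have hjN : ¬ j.val < N := by
              have : j.val ≠ N - 1 := fun h => hjn (Fin.ext (h.trans hn1v.symm))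
              omega
            rw [if_neg hjN]
            ring
  -- charpoly as determinant of the reduced matrix
  have hcp : A.charpoly = (L * M * R).det := by
    rw [Matrix.det_mul, Matrix.det_mul, hdetL, hdetR, one_mul, mul_one]
    rfl
  -- block triangular determinant
  have hblock := Matrix.twoBlockTriangular_det' (L * M * R) (fun i => i.val < N - 1)
    (by
      intro i hi j hj
      rw [hM2, if_pos hi, if_neg (show i ≠ j from fun h => hj (h ▸ hi))])
  -- first block: diagonal
  have hb1 : ((L * M * R).toSquareBlockProp (fun i => i.val < N - 1)) =
      Matrix.diagonal (fun _ => X - C (β * w)) := by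
    ext a b
    have ha : (a : Fin (N + 1)).val < N - 1 := a.2
    by_cases hab : a = b
    · subst hab
      simp [Matrix.toSquareBlockProp, Matrix.diagonal_apply_eq, hM2, ha]
    · have hab' : (a : Fin (N + 1)) ≠ (b : Fin (N + 1)) := fun h => hab (Subtype.ext h)
      simp [Matrix.toSquareBlockProp, Matrix.diagonal_apply_ne _ hab, hM2, ha, hab']
  have hcard2 : Fintype.card {i : Fin (N + 1) // i.val < N - 1} = N - 1 := by
    rw [Fintype.card_subtype]
    exact hfilt
  have hb1det : ((L * M * R).toSquareBlockProp (fun i => i.val < N - 1)).det =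
      (X - C (β * w)) ^ (N - 1) := by
    rw [hb1, Matrix.det_diagonal, Finset.prod_const, Finset.card_univ, hcard2]
  -- second block: 2 × 2
  have hmemn1 : ¬ (n1 : Fin (N + 1)).val < N - 1 := by rw [hn1v]; omega
  have hmemnl : ¬ (nl : Fin (N + 1)).val < N - 1 := by rw [hnlv]; omega
  let e : Fin 2 ≃ {i : Fin (N + 1) // ¬ i.val < N - 1} :=
    { toFun := fun j => if j = 0 then ⟨n1, hmemn1⟩ else ⟨nl, hmemnl⟩
      invFun := fun i => if (i : Fin (N + 1)) = n1 then 0 else 1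
      left_inv := by
        intro j
        fin_cases j
        · simp
        · simp [Ne.symm hn1nl]
      right_inv := by
        rintro ⟨i, hi⟩
        by_cases h : i = n1
        · simp [h]
        · have hv : i = nl := by
            have hne : i.val ≠ N - 1 := fun hh => h (Fin.ext (hh.trans hn1v.symm))
            have := i.isLt
            exact Fin.ext (by rw [hnlv]; omega)
          simp [h, hv]
          exact fun h' => h'.symm }
  have hDn1n1 : (L * M * R) n1 n1 = X + C (((N : ℝ) - 1) * (β * w)) := by
    rw [hM2, if_neg hmemn1, if_pos rfl, if_neg hmemn1, if_pos rfl]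
  have hDn1nl : (L * M * R) n1 nl = C (-(k * w)) := by
    rw [hM2, if_neg hmemn1, if_pos rfl, if_neg hmemnl, if_neg (Ne.symm hn1nl)]
  have hDnln1 : (L * M * R) nl n1 = C ((N : ℝ) * (k * u)) := by
    rw [hM2, if_neg hmemnl, if_neg (Ne.symm hn1nl), if_neg hmemn1, if_pos rfl]
  have hDnlnl : (L * M * R) nl nl = X + C (μ * u) := by
    rw [hM2, if_neg hmemnl, if_neg (Ne.symm hn1nl), if_neg hmemnl,
      if_neg (Ne.symm hn1nl)]
  have hb2det : ((L * M * R).toSquareBlockProp (fun i => ¬ i.val < N - 1)).det =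
      X ^ 2 + C (μ * u + ((N : ℝ) - 1) * (β * w)) * X
        + C (((N : ℝ) - 1) * (β * w) * (μ * u) + (N : ℝ) * (k * u) * (k * w)) := by
    rw [← Matrix.det_submatrix_equiv_self e, Matrix.det_fin_two]
    have h00 : (((L * M * R).toSquareBlockProp (fun i => ¬ i.val < N - 1)).submatrix e e) 0 0
        = (L * M * R) n1 n1 := rfl
    have h01 : (((L * M * R).toSquareBlockProp (fun i => ¬ i.val < N - 1)).submatrix e e) 0 1
        = (L * M * R) n1 nl := rfl
    have h10 : (((L * M * R).toSquareBlockProp (fun i => ¬ i.val < N - 1)).submatrix e e) 1 0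
        = (L * M * R) nl n1 := rfl
    have h11 : (((L * M * R).toSquareBlockProp (fun i => ¬ i.val < N - 1)).submatrix e e) 1 1
        = (L * M * R) nl nl := rfl
    rw [h00, h01, h10, h11, hDn1n1, hDn1nl, hDnln1, hDnlnl]
    simp only [C_add, C_sub, C_mul, C_neg, C_1]
    push_cast
    ring
  rw [hcp, hblock, hb1det, hb2det]

lemma quad_neg_re (b1 b0 : ℝ) (h1 : 0 < b1) (h0 : 0 < b0) (z : ℂ)
    (hz : z ^ 2 + (b1 : ℂ) * z + (b0 : ℂ) = 0) : z.re < 0 := by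
  have hre := congrArg Complex.re hz
  have him := congrArg Complex.im hz
  simp [pow_two, Complex.add_re, Complex.add_im, Complex.mul_re, Complex.mul_im] at hre him
  by_contra h
  push_neg at h
  have him' : z.im * (2 * z.re + b1) = 0 := by ring_nf; ring_nf at him; linarith
  rcases mul_eq_zero.mp him' with hy | hx
  · nlinarith [hre]
  · nlinarith

/-- Spectral analysis of the linearization matrix `A_β` at the positive constant
solution (Lemma 3.3 / Theorem 1.1): for `N ≥ 2` and positive `w, u, β, k, μ`,
`βw` is an eigenvalue of `A_β` over `ℂ` (a root of its characteristic polynomial)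
of algebraic multiplicity exactly `N − 1`, every other complex eigenvalue has
strictly negative real part, and in particular `A_β` has an eigenvalue with
strictly positive real part. -/
theorem stmt4 (N : ℕ) (hN : 2 ≤ N) (w u β k μ : ℝ)
    (hw : 0 < w) (hu : 0 < u) (hβ : 0 < β) (hk : 0 < k) (hμ : 0 < μ)
    (A : Matrix (Fin (N + 1)) (Fin (N + 1)) ℝ)
    (hA : A = Matrix.of fun (i j : Fin (N + 1)) =>
      if i.val < N then
        (if j.val < N then (if i = j then (0 : ℝ) else -β * w) else k * w)
      else (if j.val < N then -k * u else -μ * u)) :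
    ((A.map (Complex.ofReal)).charpoly.rootMultiplicity ((β * w : ℝ) : ℂ) = N - 1) ∧
      (∀ z : ℂ, (A.map (Complex.ofReal)).charpoly.IsRoot z →
        z ≠ ((β * w : ℝ) : ℂ) → z.re < 0) ∧
      (∃ z : ℂ, (A.map (Complex.ofReal)).charpoly.IsRoot z ∧ 0 < z.re) := by
  have hN1 : (0 : ℝ) < (N : ℝ) - 1 := by
    have : (2 : ℝ) ≤ (N : ℝ) := by exact_mod_cast hN
    linarith
  have hNpos : (0 : ℝ) < (N : ℝ) := by linarith
  have hb1 : 0 < μ * u + ((N : ℝ) - 1) * (β * w) := by positivity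
  have hb0 : 0 < ((N : ℝ) - 1) * (β * w) * (μ * u) + (N : ℝ) * (k * u) * (k * w) := by positivity
  have hfact := charpoly_A N hN w u β k μ A hA
  have hmap : (A.map Complex.ofReal).charpoly =
      (X - C ((β * w : ℝ) : ℂ)) ^ (N - 1) *
        (X ^ 2 + C ((μ * u + ((N : ℝ) - 1) * (β * w) : ℝ) : ℂ) * X
          + C ((((N : ℝ) - 1) * (β * w) * (μ * u) + (N : ℝ) * (k * u) * (k * w) : ℝ) : ℂ)) := by
    have : A.map Complex.ofReal = A.map (Complex.ofRealHom : ℝ →+* ℂ) := rfl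
    rw [this, Matrix.charpoly_map, hfact]
    simp [Polynomial.map_mul, Polynomial.map_pow, Polynomial.map_sub, Polynomial.map_add,
      Polynomial.map_X, Polynomial.map_C]
  have hpow0 : (X - C ((β * w : ℝ) : ℂ)) ^ (N - 1) ≠ 0 :=
    pow_ne_zero _ (Polynomial.X_sub_C_ne_zero _)
  have hqa : (((β * w : ℝ) : ℂ) ^ 2 + ((μ * u + ((N : ℝ) - 1) * (β * w) : ℝ) : ℂ)
      * ((β * w : ℝ) : ℂ)
      + ((((N : ℝ) - 1) * (β * w) * (μ * u) + (N : ℝ) * (k * u) * (k * w) : ℝ) : ℂ)) ≠ 0 := by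
    have hpos : (0 : ℝ) < (β * w) ^ 2 + (μ * u + ((N : ℝ) - 1) * (β * w)) * (β * w)
        + (((N : ℝ) - 1) * (β * w) * (μ * u) + (N : ℝ) * (k * u) * (k * w)) := by positivity
    have := Complex.ofReal_ne_zero.mpr hpos.ne'
    push_cast at this ⊢
    convert this using 2 <;> push_cast <;> ring
  have hq0 : (X ^ 2 + C ((μ * u + ((N : ℝ) - 1) * (β * w) : ℝ) : ℂ) * X
      + C ((((N : ℝ) - 1) * (β * w) * (μ * u) + (N : ℝ) * (k * u) * (k * w) : ℝ) : ℂ)) ≠ 0 := by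
    intro h
    apply hqa
    have := congrArg (Polynomial.eval ((β * w : ℝ) : ℂ)) h
    simpa using this
  refine ⟨?_, ?_, ?_⟩
  · rw [hmap, Polynomial.rootMultiplicity_mul (mul_ne_zero hpow0 hq0),
      Polynomial.rootMultiplicity_X_sub_C_pow,
      Polynomial.rootMultiplicity_eq_zero (by simpa [Polynomial.IsRoot] using hqa), add_zero]
  · intro z hz hne
    rw [hmap] at hz
    simp only [Polynomial.IsRoot, Polynomial.eval_mul, Polynomial.eval_pow,
      Polynomial.eval_sub, Polynomial.eval_X, Polynomial.eval_C, Polynomial.eval_add,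
      mul_eq_zero, pow_eq_zero_iff'] at hz
    rcases hz with ⟨h1, -⟩ | h2
    · exact absurd (sub_eq_zero.mp h1) hne
    · exact quad_neg_re _ _ hb1 hb0 z h2
  · refine ⟨((β * w : ℝ) : ℂ), ?_, by simpa using mul_pos hβ hw⟩
    rw [hmap]
    simp [Polynomial.IsRoot, sub_self, zero_pow (by omega : N - 1 ≠ 0)]
end
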